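/- For every n ∈ ℕ, no root of the form w·a with a elementary and ℓ(w) < n lies in D_n: {wa : a ∈ D_0, w ∈ W, ℓ(w) < n} ∩ D_n = ∅. -/

import Mathlib

open Real

variable {V : Type*} [AddCommGroup V] [Module ℝ V]

/-- The set of positive linear combinations of a set `A`. -/
def PLC (A : Set V) : Set V :=
  {v | ∃ (s : Finset V) (c : V → ℝ), (↑s : Set V) ⊆ A ∧ (∀ x ∈ s, 0 ≤ c x) ∧
    (∃ x ∈ s, 0 < c x) ∧ v = ∑ x ∈ s, c x • x}

/-- A Coxeter datum (Krammer): a root basis `Pi` in `V` with bilinear form `B`. -/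
structure CoxeterDatum (V : Type*) [AddCommGroup V] [Module ℝ V] where
  B : LinearMap.BilinForm ℝ V
  Pi : Set V
  norm_one : ∀ a ∈ Pi, B a a = 1
  symm : ∀ a ∈ Pi, ∀ b ∈ Pi, B a b = B b a
  offdiag : ∀ a ∈ Pi, ∀ b ∈ Pi, a ≠ b →
    (∃ m : ℕ, 2 ≤ m ∧ B a b = -Real.cos (Real.pi / m)) ∨ B a b ≤ -1
  zero_not_plc : (0 : V) ∉ PLC Pi

namespace CoxeterDatum

variable (D : CoxeterDatum V)

/-- The reflection in the vector `a`, as a linear endomorphism of `V`. -/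
noncomputable def refl (a : V) : Module.End ℝ V where
  toFun x := x - (2 * D.B x a) • a
  map_add' x y := by simp only [map_add, LinearMap.add_apply]; module
  map_smul' c x := by simp only [map_smul, LinearMap.smul_apply, smul_eq_mul,
    RingHom.id_apply]; module

/-- The set of simple reflections, as invertible endomorphisms of `V`. -/
def simples : Set (Module.End ℝ V)ˣ :=
  {u | ∃ a ∈ D.Pi, (u : Module.End ℝ V) = D.refl a}

/-- The Coxeter group `W`, realized as the group generated by the simple reflections. -/
noncomputable def Wgrp : Subgroup (Module.End ℝ V)ˣ := Subgroup.closure D.simples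

/-- The root system. -/
def roots : Set V :=
  {x | ∃ w ∈ D.Wgrp, ∃ a ∈ D.Pi, x = (w : Module.End ℝ V) a}

/-- The positive roots. -/
def posRoots : Set V := D.roots ∩ PLC D.Pi

/-- The negative roots. -/
def negRoots : Set V := {x | -x ∈ D.posRoots}

/-- The length of an element of `W` with respect to the simple reflections. -/
noncomputable def len (w : (Module.End ℝ V)ˣ) : ℕ :=
  sInf {n | ∃ l : List (Module.End ℝ V)ˣ,
    l.length = n ∧ (∀ u ∈ l, u ∈ D.simples) ∧ l.prod = w}

/-- The depth of a root. -/
noncomputable def dp (x : V) : ℕ :=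
  sInf {n | ∃ w ∈ D.Wgrp, D.len w = n ∧ (w : Module.End ℝ V) x ∈ D.negRoots}

/-- Dominance: `x` dominates `y` if every `w ∈ W` making `x` negative makes `y` negative. -/
def dom (x y : V) : Prop :=
  ∀ w ∈ D.Wgrp, (w : Module.End ℝ V) x ∈ D.negRoots → (w : Module.End ℝ V) y ∈ D.negRoots

/-- `D(x)`: the set of positive roots other than `x` dominated by `x`. -/
def DSet (x : V) : Set V := {y | y ∈ D.posRoots ∧ y ≠ x ∧ D.dom x y}

/-- `D_n`: the set of positive roots dominating exactly `n` other positive roots. -/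
def Dn (n : ℕ) : Set V :=
  {x | x ∈ D.posRoots ∧ (D.DSet x).Finite ∧ (D.DSet x).ncard = n}

/-- The set of reflections of `W`. -/
def TSet : Set (Module.End ℝ V)ˣ :=
  {t | ∃ w ∈ D.Wgrp, ∃ s ∈ D.simples, t = w * s * w⁻¹}

/-- `N(w)`: the set of positive roots sent to negative roots by `w`. -/
def NSet (w : (Module.End ℝ V)ˣ) : Set V :=
  {z | z ∈ D.posRoots ∧ (w : Module.End ℝ V) z ∈ D.negRoots}

/-- `N̄(w)`: the reflections `t` with `ℓ(wt) < ℓ(w)`. -/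
def Nbar (w : (Module.End ℝ V)ˣ) : Set (Module.End ℝ V)ˣ :=
  {t | t ∈ D.TSet ∧ D.len (w * t) < D.len w}

/-- The canonical generators of a reflection subgroup `W'`. -/
def canGens (W' : Subgroup (Module.End ℝ V)ˣ) : Set (Module.End ℝ V)ˣ :=
  {t | t ∈ D.TSet ∧ D.Nbar t ∩ (W' : Set (Module.End ℝ V)ˣ) = {t}}

/-- `S(x)`: elements of `W` of minimal length sending `x` into `Π` (inverse-wise). -/
def SSet (x : V) : Set (Module.End ℝ V)ˣ :=
  {w | w ∈ D.Wgrp ∧ D.len w = D.dp x - 1 ∧ ((w⁻¹ : (Module.End ℝ V)ˣ) : Module.End ℝ V) x ∈ D.Pi}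

end CoxeterDatum

/-!
For `y ∈ D(w a)`, the root `w⁻¹ y` is dominated by `a`; when `D(a) = ∅` it therefore cannot be
positive, so it is negative and `D(w a) ⊆ N(w⁻¹)`, a set with at most `ℓ(w) < n` elements.

The work is in the dichotomy `Φ = Φ⁺ ⊔ Φ⁻` (here `Π` need not be linearly independent, only
`0 ∉ PLC Π`), which follows from Tits' lemma: `ℓ(w s_a) ≥ ℓ(w)` implies `w a ∈ PLC Π`. Its proof
is by induction on `ℓ(w)`: write `w = u g` with `g` in the dihedral subgroup `⟨s_a, s_b⟩` and
`ℓ(w) = ℓ(u) + ℓ(g)`. Then `g a` is a combination of `a` and `b` whose coefficients are the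
Chebyshev values `U_{r-1}(t)`, `U_r(t)` at `t = -B(a, b)`, where `r` is the length of `g`. These are
nonnegative because `t ≥ 1` or `t = cos (π / m)` with `r < m`.
-/

namespace PLC

variable {A B : Set V} {p q v : V}

lemma mono (h : A ⊆ B) : PLC A ⊆ PLC B := fun _ ⟨s, c, hs, hc, hpos, hv⟩ =>
  ⟨s, c, hs.trans h, hc, hpos, hv⟩

lemma subset : A ⊆ PLC A := fun a ha =>
  ⟨{a}, fun _ => 1, by simpa using ha, fun _ _ => zero_le_one, ⟨a, by simp, one_pos⟩, by simp⟩

lemma smul_mem (hp : p ∈ PLC A) {t : ℝ} (ht : 0 < t) : t • p ∈ PLC A := by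
  obtain ⟨s, c, hs, hc, ⟨x, hx, hcx⟩, rfl⟩ := hp
  exact ⟨s, fun x => t * c x, hs, fun x hx => mul_nonneg ht.le (hc x hx),
    ⟨x, hx, mul_pos ht hcx⟩, by simp only [Finset.smul_sum, smul_smul]⟩

lemma add_mem (hp : p ∈ PLC A) (hq : q ∈ PLC A) : p + q ∈ PLC A := by
  classical
  obtain ⟨s₁, c₁, hs₁, hc₁, ⟨x, hx, hcx⟩, rfl⟩ := hp
  obtain ⟨s₂, c₂, hs₂, hc₂, -, rfl⟩ := hq
  have extend : ∀ {s : Finset V} (c : V → ℝ), s ⊆ s₁ ∪ s₂ →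
      ∑ y ∈ s, c y • y = ∑ y ∈ s₁ ∪ s₂, (↑s : Set V).indicator c y • y := fun c h => by
    rw [← Finset.sum_indicator_subset _ h]
    simp only [Set.indicator_smul_apply_left]
  have hnonneg : ∀ {s : Finset V} {c : V → ℝ}, (∀ y ∈ s, 0 ≤ c y) →
      ∀ y, 0 ≤ (↑s : Set V).indicator c y := fun hc => Set.indicator_nonneg hc
  refine ⟨s₁ ∪ s₂, (↑s₁ : Set V).indicator c₁ + (↑s₂ : Set V).indicator c₂,
    Finset.coe_union s₁ s₂ ▸ Set.union_subset hs₁ hs₂,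
    fun y _ => add_nonneg (hnonneg hc₁ y) (hnonneg hc₂ y),
    ⟨x, Finset.mem_union_left _ hx, ?_⟩, ?_⟩
  · simpa [Set.indicator_of_mem (Finset.mem_coe.2 hx)] using
      add_pos_of_pos_of_nonneg hcx (hnonneg hc₂ x)
  · simp only [Pi.add_apply, add_smul, Finset.sum_add_distrib,
      ← extend c₁ Finset.subset_union_left, ← extend c₂ Finset.subset_union_right]

lemma smul_add_smul_mem (hp : p ∈ PLC A) (hq : q ∈ PLC A) {s t : ℝ} (hs : 0 ≤ s) (ht : 0 ≤ t)
    (hst : 0 < s + t) : s • p + t • q ∈ PLC A := by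
  rcases hs.eq_or_lt with rfl | hs
  · simpa using smul_mem hq (by simpa using hst)
  rcases ht.eq_or_lt with rfl | ht
  · simpa using smul_mem hp hs
  exact add_mem (smul_mem hp hs) (smul_mem hq ht)

lemma eq_smul_or_sub_smul_mem_diff (hv : v ∈ PLC A) (a : V) :
    (∃ t : ℝ, 0 < t ∧ v = t • a) ∨ ∃ t : ℝ, 0 ≤ t ∧ v - t • a ∈ PLC (A \ {a}) := by
  classical
  obtain ⟨s, c, hs, hc, ⟨x, hx, hcx⟩, rfl⟩ := hv
  have hsum : ∑ y ∈ s, c y • y - (↑s : Set V).indicator c a • a = ∑ y ∈ s.erase a, c y • y := by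
    by_cases ha : a ∈ s
    · rw [← Finset.add_sum_erase s _ ha, Set.indicator_of_mem (Finset.mem_coe.2 ha)]
      abel
    · rw [Set.indicator_of_notMem (Finset.mem_coe.not.2 ha), Finset.erase_eq_of_notMem ha]
      simp
  by_cases hpos : ∃ y ∈ s.erase a, 0 < c y
  · refine Or.inr ⟨_, Set.indicator_nonneg hc a, hsum ▸ ⟨s.erase a, c, ?_,
      fun y hy => hc y (Finset.mem_of_mem_erase hy), hpos, rfl⟩⟩
    intro y hy
    exact ⟨hs (Finset.mem_of_mem_erase hy), Finset.ne_of_mem_erase hy⟩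
  push Not at hpos
  have hzero : ∀ y ∈ s.erase a, c y = 0 := fun y hy =>
    le_antisymm (hpos y hy) (hc y (Finset.mem_of_mem_erase hy))
  obtain rfl : x = a := by
    by_contra hxa
    exact hcx.ne' (hzero x (Finset.mem_erase.2 ⟨hxa, hx⟩))
  refine Or.inl ⟨c x, hcx, ?_⟩
  rw [← sub_eq_zero, ← Set.indicator_of_mem (Finset.mem_coe.2 hx) c, hsum]
  exact Finset.sum_eq_zero fun y hy => by rw [hzero y hy, zero_smul]

end PLC

section DihedralWords

variable {G : Type*} [Group G] (p q : G)

/-- The product of a word in the two letters `p` (encoded by `false`) and `q` (by `true`). -/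
def wordProd (l : List Bool) : G := (l.map fun x => cond x q p).prod

def altWord : ℕ → Bool → List Bool
  | 0, _ => []
  | n + 1, x => altWord n (!x) ++ [x]

def IsMinimalWord (l : List Bool) : Prop :=
  ∀ l' : List Bool, wordProd p q l' = wordProd p q l → l.length ≤ l'.length

variable {p q}

@[simp]
lemma wordProd_nil : wordProd p q [] = 1 := rfl

@[simp]
lemma wordProd_append (l₁ l₂ : List Bool) :
    wordProd p q (l₁ ++ l₂) = wordProd p q l₁ * wordProd p q l₂ := by
  simp [wordProd]

@[simp]
lemma wordProd_singleton (x : Bool) : wordProd p q [x] = cond x q p := by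
  simp [wordProd]

@[simp]
lemma length_altWord (n : ℕ) (x : Bool) : (altWord n x).length = n := by
  induction n generalizing x with
  | zero => rfl
  | succ n ih => simp [altWord, ih]

lemma altWord_add_two (n : ℕ) (x : Bool) : altWord (n + 2) x = altWord n x ++ [!x, x] := by
  simp [altWord]

lemma exists_altWord_add (k m : ℕ) (x : Bool) :
    ∃ y, altWord (k + m) x = altWord k y ++ altWord m x := by
  induction m generalizing x with
  | zero => exact ⟨x, by simp [altWord]⟩
  | succ m ih =>
    obtain ⟨y, hy⟩ := ih (!x)
    exact ⟨y, by rw [← add_assoc, altWord, hy, altWord, List.append_assoc]⟩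

lemma wordProd_altWord_two_mul (k : ℕ) (x : Bool) :
    wordProd p q (altWord (2 * k) x) = (cond (!x) q p * cond x q p) ^ k := by
  induction k with
  | zero => simp [altWord]
  | succ k ih =>
    rw [Nat.mul_succ, altWord_add_two, wordProd_append, ih, pow_succ]
    simp [wordProd]

lemma wordProd_altWord_two_mul_add_one (k : ℕ) (x : Bool) :
    wordProd p q (altWord (2 * k + 1) x) = cond x q p * (cond (!x) q p * cond x q p) ^ k := by
  induction k with
  | zero => simp [altWord]
  | succ k ih =>
    rw [show 2 * (k + 1) + 1 = 2 * k + 1 + 2 by ring, altWord_add_two, wordProd_append, ih,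
      pow_succ]
    simp [wordProd, mul_assoc]

lemma IsMinimalWord.of_append {l₁ l₂ : List Bool} (h : IsMinimalWord p q (l₁ ++ l₂)) :
    IsMinimalWord p q l₁ := fun l' hl' => by
  have := h (l' ++ l₂) (by simp [hl'])
  simp only [List.length_append] at this
  omega

lemma cond_mul_self (hp : p * p = 1) (hq : q * q = 1) (x : Bool) : cond x q p * cond x q p = 1 := by
  cases x <;> assumption

/-- Adjacent equal letters cancel, so a shortest word alternates. -/
lemma IsMinimalWord.eq_altWord (hp : p * p = 1) (hq : q * q = 1) {l : List Bool} {x : Bool}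
    (h : IsMinimalWord p q (l ++ [x])) :
    l ++ [x] = altWord (l.length + 1) x := by
  induction l using List.reverseRecOn generalizing x with
  | nil => rfl
  | append_singleton l y ih =>
    have hy : y = !x := by
      by_contra hne
      obtain rfl : y = x := by cases x <;> cases y <;> simp_all
      have := h l (by simp [wordProd, cond_mul_self hp hq])
      simp at this
    subst hy
    rw [List.length_append, List.length_singleton, altWord, ← ih h.of_append]

/-- The braid relation. -/
lemma wordProd_altWord_true_eq_false (hp : p * p = 1) (hq : q * q = 1) {m : ℕ}
    (hrel : (p * q) ^ m = 1) :
    wordProd p q (altWord m true) = wordProd p q (altWord m false) := by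
  have hqp : q * p = (p * q)⁻¹ := by
    rw [mul_inv_rev, inv_eq_of_mul_eq_one_right hp, inv_eq_of_mul_eq_one_right hq]
  obtain ⟨k, rfl | rfl⟩ := Nat.even_or_odd' m
  · simp only [wordProd_altWord_two_mul, Bool.not_true, Bool.not_false, cond_true, cond_false,
      hqp, inv_pow]
    rw [pow_mul'] at hrel
    exact eq_inv_of_mul_eq_one_left (by rwa [← pow_two])
  · simp only [wordProd_altWord_two_mul_add_one, Bool.not_true, Bool.not_false, cond_true,
      cond_false, hqp, inv_pow]
    have h : p * (q * (p * q) ^ k * (p * q) ^ k) = 1 := by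
      rw [← hrel, pow_succ', two_mul, pow_add]
      simp only [mul_assoc]
    rw [eq_mul_inv_iff_mul_eq]
    calc q * (p * q) ^ k * (p * q) ^ k = p * (p * (q * (p * q) ^ k * (p * q) ^ k)) := by
          rw [← mul_assoc p p, hp, one_mul]
      _ = p := by rw [h, mul_one]

/-- If `r ≥ m`, the braid relation turns the last `m` letters into a word ending in `p`, which
cancels against the extra `p`. -/
lemma length_lt_of_pow_eq_one (hp : p * p = 1) (hq : q * q = 1) {m r : ℕ} (hm : 0 < m)
    (hrel : (p * q) ^ m = 1)
    (hmin : ∀ l', wordProd p q l' = wordProd p q (altWord r true) * p → r ≤ l'.length) :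
    r < m := by
  by_contra! hrm
  obtain ⟨y, hy⟩ := exists_altWord_add (r - m) m true
  rw [Nat.sub_add_cancel hrm] at hy
  have hbraid : wordProd p q (altWord m true) = wordProd p q (altWord (m - 1) true) * p := by
    rw [wordProd_altWord_true_eq_false hp hq hrel]
    obtain ⟨m, rfl⟩ := Nat.exists_eq_add_of_lt hm
    simp [altWord]
  have := hmin (altWord (r - m) y ++ altWord (m - 1) true) (by
    rw [hy, wordProd_append, wordProd_append, hbraid, mul_assoc, mul_assoc, hp, mul_one])
  simp only [List.length_append, length_altWord] at this
  omega

end DihedralWords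

open Polynomial.Chebyshev

section Chebyshev

lemma chebU_eval_add_one (t : ℝ) (n : ℤ) :
    (U ℝ (n + 1)).eval t = 2 * t * (U ℝ n).eval t - (U ℝ (n - 1)).eval t := by
  simp [U_add_one]

variable {m : ℕ}

lemma sin_pi_div_pos (hm : 2 ≤ m) : 0 < Real.sin (π / m) := by
  have hm' : (2 : ℝ) ≤ m := by exact_mod_cast hm
  refine Real.sin_pos_of_pos_of_lt_pi (by positivity) ?_
  rw [div_lt_iff₀ (by linarith)]
  nlinarith [Real.pi_pos]

lemma chebU_eval_cos_pi_div_nonneg (hm : 2 ≤ m) {n : ℤ} (h0 : -1 ≤ n) (hn : n < m) :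
    0 ≤ (U ℝ n).eval (Real.cos (π / m)) := by
  refine nonneg_of_mul_nonneg_left ?_ (sin_pi_div_pos hm)
  rw [U_real_cos]
  have hm' : (0 : ℝ) < m := by positivity
  have hn' : (n : ℝ) + 1 ≤ m := by exact_mod_cast hn
  refine Real.sin_nonneg_of_nonneg_of_le_pi (by
    exact mul_nonneg (by exact_mod_cast (by omega : (0 : ℤ) ≤ n + 1)) (by positivity)) ?_
  rw [← mul_div_assoc, div_le_iff₀ hm']
  nlinarith [Real.pi_pos]

lemma chebU_eval_cos_pi_div_pos (hm : 2 ≤ m) {n : ℤ} (h0 : 0 ≤ n) (hn : n + 1 < m) :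
    0 < (U ℝ n).eval (Real.cos (π / m)) := by
  refine pos_of_mul_pos_left ?_ (sin_pi_div_pos hm).le
  rw [U_real_cos]
  have hm' : (0 : ℝ) < m := by positivity
  have hn' : (n : ℝ) + 1 < m := by exact_mod_cast hn
  refine Real.sin_pos_of_pos_of_lt_pi (mul_pos (by exact_mod_cast (by omega : (0 : ℤ) < n + 1))
    (by positivity)) ?_
  rw [← mul_div_assoc, div_lt_iff₀ hm']
  nlinarith [Real.pi_pos]

/-- With `θ = π / m`, these values are `sin ((2m + 1)θ) / sin θ` and `sin (2mθ) / sin θ`. -/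
lemma chebU_eval_cos_pi_div_two_mul (hm : 2 ≤ m) :
    (U ℝ (2 * m)).eval (Real.cos (π / m)) = 1 ∧ (U ℝ (2 * m - 1)).eval (Real.cos (π / m)) = 0 := by
  have hsin := (sin_pi_div_pos hm).ne'
  have hm' : (m : ℝ) ≠ 0 := by positivity
  constructor
  · refine mul_right_cancel₀ hsin ?_
    rw [U_real_cos, one_mul]
    push_cast
    rw [show (2 * (m : ℝ) + 1) * (π / m) = π / m + 2 * π by field_simp; ring,
      Real.sin_add_two_pi]
  · refine mul_right_cancel₀ hsin ?_
    rw [U_real_cos, zero_mul]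
    push_cast
    rw [show (2 * (m : ℝ) - 1 + 1) * (π / m) = 2 * π by field_simp; ring, Real.sin_two_pi]

lemma chebU_eval_nonneg_of_one_le {t : ℝ} (ht : 1 ≤ t) (n : ℕ) :
    0 ≤ (U ℝ (n - 1)).eval t ∧ (U ℝ (n - 1)).eval t + 1 ≤ (U ℝ n).eval t := by
  induction n with
  | zero => simp
  | succ n ih =>
    push_cast
    rw [add_sub_cancel_right, chebU_eval_add_one]
    constructor <;> nlinarith [ih.1, ih.2]

lemma chebU_eval_consecutive_nonneg {t : ℝ} {r : ℕ}
    (h : 1 ≤ t ∨ ∃ m : ℕ, 2 ≤ m ∧ t = Real.cos (π / m) ∧ r < m) :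
    0 ≤ (U ℝ (r - 1)).eval t ∧ 0 ≤ (U ℝ r).eval t ∧
      0 < (U ℝ (r - 1)).eval t + (U ℝ r).eval t := by
  rcases h with ht | ⟨m, hm, rfl, hr⟩
  · obtain ⟨h0, h1⟩ := chebU_eval_nonneg_of_one_le ht r
    exact ⟨h0, by linarith, by linarith⟩
  have hr' : (r : ℤ) < m := by exact_mod_cast hr
  refine ⟨chebU_eval_cos_pi_div_nonneg hm (by omega) (by omega),
    chebU_eval_cos_pi_div_nonneg hm (by omega) hr', ?_⟩
  rcases Nat.eq_zero_or_pos r with rfl | hr0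
  · simp
  · exact add_pos_of_pos_of_nonneg (chebU_eval_cos_pi_div_pos hm (by omega) (by omega))
      (chebU_eval_cos_pi_div_nonneg hm (by omega) hr')

end Chebyshev

namespace CoxeterDatum

section Units

variable (u v : (Module.End ℝ V)ˣ) (x : V)

@[simp]
lemma units_mul_apply :
    ((u * v : (Module.End ℝ V)ˣ) : Module.End ℝ V) x =
      (u : Module.End ℝ V) ((v : Module.End ℝ V) x) := rfl

@[simp]
lemma units_inv_apply_apply :
    ((u⁻¹ : (Module.End ℝ V)ˣ) : Module.End ℝ V) ((u : Module.End ℝ V) x) = x := by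
  rw [← units_mul_apply, inv_mul_cancel, Units.val_one, Module.End.one_apply]

@[simp]
lemma units_apply_inv_apply :
    (u : Module.End ℝ V) (((u⁻¹ : (Module.End ℝ V)ˣ) : Module.End ℝ V) x) = x := by
  rw [← units_mul_apply, mul_inv_cancel, Units.val_one, Module.End.one_apply]

end Units

variable (D : CoxeterDatum V) {w u v p q : (Module.End ℝ V)ˣ}

lemma refl_apply (a x : V) : D.refl a x = x - (2 * D.B x a) • a := rfl

lemma refl_apply_of_B_eq_zero {a x : V} (h : D.B x a = 0) : D.refl a x = x := by
  rw [refl_apply, h, mul_zero, zero_smul, sub_zero]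

section Reflections

variable {a : V}

lemma refl_self (ha : a ∈ D.Pi) : D.refl a a = -a := by
  rw [refl_apply, D.norm_one a ha]
  module

lemma refl_mul_refl (ha : a ∈ D.Pi) : D.refl a * D.refl a = 1 := by
  refine LinearMap.ext fun x => ?_
  simp only [Module.End.mul_apply, refl_apply, map_sub, map_smul, D.norm_one a ha,
    Module.End.one_apply]
  module

noncomputable def reflUnit (ha : a ∈ D.Pi) : (Module.End ℝ V)ˣ :=
  ⟨D.refl a, D.refl a, D.refl_mul_refl ha, D.refl_mul_refl ha⟩

@[simp]
lemma coe_reflUnit (ha : a ∈ D.Pi) : (D.reflUnit ha : Module.End ℝ V) = D.refl a := rfl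

lemma reflUnit_mem_simples (ha : a ∈ D.Pi) : D.reflUnit ha ∈ D.simples := ⟨a, ha, rfl⟩

lemma reflUnit_mem_Wgrp (ha : a ∈ D.Pi) : D.reflUnit ha ∈ D.Wgrp :=
  Subgroup.subset_closure (D.reflUnit_mem_simples ha)

lemma reflUnit_mul_self (ha : a ∈ D.Pi) : D.reflUnit ha * D.reflUnit ha = 1 :=
  Units.ext (D.refl_mul_refl ha)

end Reflections

lemma exists_eq_reflUnit {s : (Module.End ℝ V)ˣ} (hs : s ∈ D.simples) :
    ∃ (a : V) (ha : a ∈ D.Pi), s = D.reflUnit ha := by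
  obtain ⟨a, ha, hs⟩ := hs
  exact ⟨a, ha, Units.ext hs⟩

lemma inv_mem_simples {s : (Module.End ℝ V)ˣ} (hs : s ∈ D.simples) : s⁻¹ ∈ D.simples := by
  obtain ⟨a, ha, rfl⟩ := D.exists_eq_reflUnit hs
  rw [inv_eq_of_mul_eq_one_right (D.reflUnit_mul_self ha)]
  exact D.reflUnit_mem_simples ha

@[elab_as_elim]
lemma Wgrp_induction {P : (w : (Module.End ℝ V)ˣ) → w ∈ D.Wgrp → Prop}
    (one : P 1 (one_mem _))
    (mul_left : ∀ (a : V) (ha : a ∈ D.Pi) w (hw : w ∈ D.Wgrp), P w hw →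
      P (D.reflUnit ha * w) (mul_mem (D.reflUnit_mem_Wgrp ha) hw))
    {w : (Module.End ℝ V)ˣ} (hw : w ∈ D.Wgrp) : P w hw := by
  have mul_simple : ∀ s (hs : s ∈ D.simples) w (hw : w ∈ D.Wgrp), P w hw →
      P (s * w) (mul_mem (Subgroup.subset_closure hs) hw) := by
    intro s hs w hw hPw
    obtain ⟨a, ha, rfl⟩ := D.exists_eq_reflUnit hs
    exact mul_left a ha w hw hPw
  induction hw using Subgroup.closure_induction_left with
  | one => exact one
  | mul_left s hs w hw ih => exact mul_simple s hs w hw ih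
  | inv_mul_cancel s hs w hw ih => exact mul_simple _ (D.inv_mem_simples hs) w hw ih

lemma len_prod_le {l : List (Module.End ℝ V)ˣ} (hl : ∀ u ∈ l, u ∈ D.simples) :
    D.len l.prod ≤ l.length :=
  Nat.sInf_le ⟨l, rfl, hl, rfl⟩

lemma exists_reduced_word (hw : w ∈ D.Wgrp) :
    ∃ l : List (Module.End ℝ V)ˣ, (∀ u ∈ l, u ∈ D.simples) ∧ l.prod = w ∧ l.length = D.len w := by
  have hword : ∃ l : List (Module.End ℝ V)ˣ, (∀ u ∈ l, u ∈ D.simples) ∧ l.prod = w := by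
    induction hw using D.Wgrp_induction with
    | one => exact ⟨[], by simp, rfl⟩
    | mul_left a ha w _ ih =>
      obtain ⟨l, hl, rfl⟩ := ih
      exact ⟨D.reflUnit ha :: l, by simpa [D.reflUnit_mem_simples ha] using hl, rfl⟩
  obtain ⟨l, hl, hprod⟩ := hword
  obtain ⟨l', hlen, hl', hprod'⟩ := Nat.sInf_mem (s := {n | ∃ l : List (Module.End ℝ V)ˣ,
    l.length = n ∧ (∀ u ∈ l, u ∈ D.simples) ∧ l.prod = w}) ⟨l.length, l, rfl, hl, hprod⟩
  exact ⟨l', hl', hprod', hlen⟩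

lemma eq_one_of_len_eq_zero (hw : w ∈ D.Wgrp) (h : D.len w = 0) : w = 1 := by
  obtain ⟨l, -, rfl, hlen⟩ := D.exists_reduced_word hw
  rw [h, List.length_eq_zero_iff] at hlen
  rw [hlen, List.prod_nil]

lemma len_mul_le (hw : w ∈ D.Wgrp) (hv : v ∈ D.Wgrp) : D.len (w * v) ≤ D.len w + D.len v := by
  obtain ⟨l₁, hl₁, rfl, h₁⟩ := D.exists_reduced_word hw
  obtain ⟨l₂, hl₂, rfl, h₂⟩ := D.exists_reduced_word hv
  have := D.len_prod_le (l := l₁ ++ l₂) fun u hu => (List.mem_append.1 hu).elim (hl₁ u) (hl₂ u)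
  rwa [List.prod_append, List.length_append, h₁, h₂] at this

lemma len_inv_le (hw : w ∈ D.Wgrp) : D.len w⁻¹ ≤ D.len w := by
  obtain ⟨l, hl, rfl, hlen⟩ := D.exists_reduced_word hw
  have := D.len_prod_le (l := (l.map (·⁻¹)).reverse) fun u hu => by
    obtain ⟨v, hv, rfl⟩ := List.mem_map.1 (List.mem_reverse.1 hu)
    exact D.inv_mem_simples (hl v hv)
  rwa [← List.prod_inv_reverse, List.length_reverse, List.length_map, hlen] at this

lemma mul_self_of_mem_simples {s : (Module.End ℝ V)ˣ} (hs : s ∈ D.simples) : s * s = 1 := by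
  obtain ⟨a, ha, rfl⟩ := D.exists_eq_reflUnit hs
  exact D.reflUnit_mul_self ha

lemma len_le_len_mul_add_one (hw : w ∈ D.Wgrp) {s : (Module.End ℝ V)ˣ} (hs : s ∈ D.simples) :
    D.len w ≤ D.len (w * s) + 1 := by
  have hs₁ : D.len s ≤ 1 := by simpa using D.len_prod_le (l := [s]) (by simpa using hs)
  have := D.len_mul_le (mul_mem hw (Subgroup.subset_closure hs)) (Subgroup.subset_closure hs)
  rw [mul_assoc, D.mul_self_of_mem_simples hs, mul_one] at this
  omega

lemma exists_len_mul_reflUnit_lt (hw : w ∈ D.Wgrp) (h : 0 < D.len w) :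
    ∃ (b : V) (hb : b ∈ D.Pi), D.len (w * D.reflUnit hb) < D.len w := by
  obtain ⟨l, hl, rfl, hlen⟩ := D.exists_reduced_word hw
  obtain ⟨l', s, rfl⟩ :=
    l.eq_nil_or_concat'.resolve_left (by rintro rfl; rw [← hlen] at h; exact h.false)
  obtain ⟨b, hb, rfl⟩ := D.exists_eq_reflUnit (hl s (by simp))
  refine ⟨b, hb, ?_⟩
  have := D.len_prod_le (l := l') fun u hu => hl u (by simp [hu])
  simp only [List.prod_append, List.prod_singleton, List.length_append,
    List.length_singleton] at hlen ⊢
  rw [mul_assoc, D.reflUnit_mul_self hb, mul_one]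
  omega

lemma B_comm_of_mem_span {x y : V} (hx : x ∈ Submodule.span ℝ D.Pi)
    (hy : y ∈ Submodule.span ℝ D.Pi) : D.B x y = D.B y x := by
  have hPi : ∀ a ∈ D.Pi, D.B a y = D.B y a := fun a ha =>
    LinearMap.eqOn_span' (f := D.B a) (g := D.B.flip a) (fun b hb => D.symm a ha b hb) hy
  exact LinearMap.eqOn_span' (f := D.B.flip y) (g := D.B y) (fun a ha => hPi a ha) hx

lemma refl_mem_span {a x : V} (ha : a ∈ D.Pi) (hx : x ∈ Submodule.span ℝ D.Pi) :
    D.refl a x ∈ Submodule.span ℝ D.Pi :=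
  sub_mem hx (Submodule.smul_mem _ _ (Submodule.subset_span ha))

lemma B_refl_refl {a x y : V} (ha : a ∈ D.Pi) (hy : y ∈ Submodule.span ℝ D.Pi) :
    D.B (D.refl a x) (D.refl a y) = D.B x y := by
  have hay : D.B a y = D.B y a := D.B_comm_of_mem_span (Submodule.subset_span ha) hy
  simp only [refl_apply, map_sub, map_smul, LinearMap.sub_apply, LinearMap.smul_apply,
    smul_eq_mul, hay, D.norm_one a ha]
  ring

lemma apply_mem_span (hw : w ∈ D.Wgrp) {x : V} (hx : x ∈ Submodule.span ℝ D.Pi) :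
    (w : Module.End ℝ V) x ∈ Submodule.span ℝ D.Pi := by
  induction hw using D.Wgrp_induction generalizing x with
  | one => exact hx
  | mul_left a ha w _ ih => exact D.refl_mem_span ha (ih hx)

lemma B_apply_apply (hw : w ∈ D.Wgrp) {x y : V} (hy : y ∈ Submodule.span ℝ D.Pi) :
    D.B ((w : Module.End ℝ V) x) ((w : Module.End ℝ V) y) = D.B x y := by
  induction hw using D.Wgrp_induction generalizing x y with
  | one => rfl
  | mul_left a ha w hw ih =>
    rw [units_mul_apply, units_mul_apply, coe_reflUnit,
      D.B_refl_refl ha (D.apply_mem_span hw hy), ih hy]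

lemma apply_mem_roots (hw : w ∈ D.Wgrp) {x : V} (hx : x ∈ D.roots) :
    (w : Module.End ℝ V) x ∈ D.roots := by
  obtain ⟨g, hg, c, hc, rfl⟩ := hx
  exact ⟨w * g, mul_mem hw hg, c, hc, rfl⟩

lemma B_self_of_mem_roots {x : V} (hx : x ∈ D.roots) : D.B x x = 1 := by
  obtain ⟨w, hw, a, ha, rfl⟩ := hx
  rw [D.B_apply_apply hw (Submodule.subset_span ha), D.norm_one a ha]

lemma notMem_negRoots_of_mem_posRoots {x : V} (hx : x ∈ D.posRoots) : x ∉ D.negRoots :=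
  fun hnx => D.zero_not_plc (by simpa using PLC.add_mem hx.2 hnx.2)

lemma B_nonpos {a b : V} (ha : a ∈ D.Pi) (hb : b ∈ D.Pi) (hab : a ≠ b) : D.B a b ≤ 0 := by
  rcases D.offdiag a ha b hb hab with ⟨m, hm, hcos⟩ | hle
  · have hm : (2 : ℝ) ≤ m := by exact_mod_cast hm
    rw [hcos, neg_nonpos]
    refine Real.cos_nonneg_of_mem_Icc ⟨by linarith [div_pos Real.pi_pos (by linarith : (0 : ℝ) < m),
      Real.pi_pos], ?_⟩
    rw [div_le_div_iff₀ (by linarith) two_pos]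
    nlinarith [Real.pi_pos]
  · linarith

lemma B_nonpos_of_mem_PLC_diff {a u : V} (ha : a ∈ D.Pi) (hu : u ∈ PLC (D.Pi \ {a})) :
    D.B a u ≤ 0 := by
  obtain ⟨s, c, hs, hc, -, rfl⟩ := hu
  rw [map_sum]
  refine Finset.sum_nonpos fun x hx => ?_
  rw [map_smul, smul_eq_mul]
  exact mul_nonpos_of_nonneg_of_nonpos (hc x hx)
    (D.B_nonpos ha (hs hx).1 (Ne.symm (hs hx).2))

/-- Pairing with `a` shows `t ≤ 0`, and then `u + (-t) • a` is a positive combination equal to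
zero. -/
lemma ne_smul_of_mem_PLC_diff {a u : V} (ha : a ∈ D.Pi) (hu : u ∈ PLC (D.Pi \ {a})) (t : ℝ) :
    u ≠ t • a := by
  rintro rfl
  have ht : t ≤ 0 := by
    simpa [D.norm_one a ha] using D.B_nonpos_of_mem_PLC_diff ha hu
  apply D.zero_not_plc
  simpa using PLC.smul_add_smul_mem (PLC.mono Set.sdiff_subset hu) (PLC.subset ha)
    zero_le_one (neg_nonneg.2 ht) (by linarith)

/-- `p` and `-s_a p` are positive with sum a multiple of `a`; by `ne_smul_of_mem_PLC_diff`
neither has a component off `a`, so `p` is a multiple of `a` of `B`-norm one. -/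
lemma eq_of_refl_mem_negRoots {a p : V} (ha : a ∈ D.Pi) (hp : p ∈ D.posRoots)
    (hneg : D.refl a p ∈ D.negRoots) : p = a := by
  have hpq : p + -D.refl a p = (2 * D.B p a) • a := by rw [refl_apply]; abel
  rcases PLC.eq_smul_or_sub_smul_mem_diff hp.2 a with ⟨t, ht, rfl⟩ | ⟨t, -, hu⟩
  · have h1 := D.B_self_of_mem_roots hp.1
    simp only [map_smul, LinearMap.smul_apply, smul_eq_mul, D.norm_one a ha] at h1
    obtain rfl : t = 1 := by nlinarith
    exact one_smul ℝ a
  exfalso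
  rcases PLC.eq_smul_or_sub_smul_mem_diff hneg.2 a with ⟨t', -, hq⟩ | ⟨t', -, hu'⟩
  · refine D.ne_smul_of_mem_PLC_diff ha hu (2 * D.B p a - t - t') ?_
    rw [sub_smul, sub_smul, ← hpq, ← hq]
    abel
  · refine D.ne_smul_of_mem_PLC_diff ha (PLC.add_mem hu hu') (2 * D.B p a - t - t') ?_
    rw [sub_smul, sub_smul, ← hpq]
    abel

section RankTwo

variable {a b : V}

lemma refl_smul_add_smul_left (ha : a ∈ D.Pi) (hb : b ∈ D.Pi) (α β : ℝ) :
    D.refl a (α • a + β • b) = (2 * -D.B a b * β - α) • a + β • b := by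
  simp only [refl_apply, map_add, map_smul, D.norm_one a ha, D.symm b hb a ha]
  module

lemma refl_smul_add_smul_right (hb : b ∈ D.Pi) (α β : ℝ) :
    D.refl b (α • a + β • b) = α • a + (2 * -D.B a b * α - β) • b := by
  simp only [refl_apply, map_add, map_smul, D.norm_one b hb]
  module

lemma reflUnit_mul_reflUnit_pow_apply (ha : a ∈ D.Pi) (hb : b ∈ D.Pi) (k : ℕ) :
    (((D.reflUnit ha * D.reflUnit hb) ^ k : (Module.End ℝ V)ˣ) : Module.End ℝ V) a =
      (U ℝ (2 * k)).eval (-D.B a b) • a + (U ℝ (2 * k - 1)).eval (-D.B a b) • b := by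
  induction k with
  | zero => simp
  | succ k ih =>
    rw [pow_succ', units_mul_apply, ih, units_mul_apply, coe_reflUnit, coe_reflUnit,
      refl_smul_add_smul_right D hb, refl_smul_add_smul_left D ha hb]
    push_cast
    rw [show 2 * ((k : ℤ) + 1) = 2 * k + 1 + 1 by ring]
    simp only [add_sub_cancel_right, chebU_eval_add_one]

lemma reflUnit_mul_reflUnit_mul_pow_apply (ha : a ∈ D.Pi) (hb : b ∈ D.Pi) (k : ℕ) :
    ((D.reflUnit hb * (D.reflUnit ha * D.reflUnit hb) ^ k : (Module.End ℝ V)ˣ) :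
      Module.End ℝ V) a =
      (U ℝ (2 * k)).eval (-D.B a b) • a + (U ℝ (2 * k + 1)).eval (-D.B a b) • b := by
  rw [units_mul_apply, D.reflUnit_mul_reflUnit_pow_apply ha hb, coe_reflUnit,
    refl_smul_add_smul_right D hb, chebU_eval_add_one]

lemma exists_eq_smul_add_smul_add (ha : a ∈ D.Pi) (hb : b ∈ D.Pi) (h : D.B a b ^ 2 ≠ 1)
    (x : V) : ∃ α β : ℝ, ∃ k : V, x = α • a + β • b + k ∧ D.B k a = 0 ∧ D.B k b = 0 := by
  have hden : 1 - D.B a b ^ 2 ≠ 0 := sub_ne_zero.2 (Ne.symm h)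
  refine ⟨(D.B x a - D.B a b * D.B x b) / (1 - D.B a b ^ 2),
    (D.B x b - D.B a b * D.B x a) / (1 - D.B a b ^ 2), _, (add_sub_cancel _ x).symm, ?_, ?_⟩ <;>
  · simp only [map_sub, map_add, map_smul, LinearMap.sub_apply, LinearMap.add_apply,
      LinearMap.smul_apply, smul_eq_mul, D.norm_one a ha, D.norm_one b hb, D.symm b hb a ha]
    field_simp
    ring

lemma reflUnit_mul_reflUnit_pow_apply_of_cos (ha : a ∈ D.Pi) (hb : b ∈ D.Pi) {m : ℕ} (hm : 2 ≤ m)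
    (hcos : D.B a b = -Real.cos (π / m)) :
    (((D.reflUnit ha * D.reflUnit hb) ^ m : (Module.End ℝ V)ˣ) : Module.End ℝ V) a = a := by
  rw [reflUnit_mul_reflUnit_pow_apply, hcos, neg_neg, (chebU_eval_cos_pi_div_two_mul hm).1,
    (chebU_eval_cos_pi_div_two_mul hm).2, one_smul, zero_smul, add_zero]

/-- `(s_a s_b)^m` fixes `a` and `b` by the Chebyshev formula, and fixes every vector
`B`-orthogonal to both. -/
lemma reflUnit_mul_reflUnit_pow_eq_one (ha : a ∈ D.Pi) (hb : b ∈ D.Pi) {m : ℕ} (hm : 2 ≤ m)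
    (hcos : D.B a b = -Real.cos (π / m)) : (D.reflUnit ha * D.reflUnit hb) ^ m = 1 := by
  have hfix_b : (((D.reflUnit ha * D.reflUnit hb) ^ m : (Module.End ℝ V)ˣ) :
      Module.End ℝ V) b = b := by
    have hinv : (D.reflUnit ha * D.reflUnit hb) ^ m = ((D.reflUnit hb * D.reflUnit ha) ^ m)⁻¹ := by
      rw [← inv_pow, mul_inv_rev, inv_eq_of_mul_eq_one_right (D.reflUnit_mul_self ha),
        inv_eq_of_mul_eq_one_right (D.reflUnit_mul_self hb)]
    have := D.reflUnit_mul_reflUnit_pow_apply_of_cos hb ha hm (by rw [D.symm b hb a ha, hcos])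
    have h := units_inv_apply_apply ((D.reflUnit hb * D.reflUnit ha) ^ m) b
    rwa [this, ← hinv] at h
  have hfix_orth : ∀ k : V, D.B k a = 0 → D.B k b = 0 → ∀ n : ℕ,
      (((D.reflUnit ha * D.reflUnit hb) ^ n : (Module.End ℝ V)ˣ) : Module.End ℝ V) k = k := by
    intro k hka hkb n
    induction n with
    | zero => rfl
    | succ n ih =>
      rw [pow_succ, units_mul_apply, units_mul_apply, coe_reflUnit, coe_reflUnit,
        D.refl_apply_of_B_eq_zero hkb, D.refl_apply_of_B_eq_zero hka, ih]
  have hcos_sq : D.B a b ^ 2 ≠ 1 := by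
    rw [hcos, neg_sq]
    nlinarith [Real.sin_sq_add_cos_sq (π / m), sin_pi_div_pos hm]
  refine Units.ext (LinearMap.ext fun x => ?_)
  obtain ⟨α, β, k, rfl, hka, hkb⟩ := D.exists_eq_smul_add_smul_add ha hb hcos_sq x
  simp only [map_add, map_smul, D.reflUnit_mul_reflUnit_pow_apply_of_cos ha hb hm hcos, hfix_b,
    hfix_orth k hka hkb, Units.val_one, Module.End.one_apply]

lemma wordProd_altWord_apply (ha : a ∈ D.Pi) (hb : b ∈ D.Pi) (r : ℕ) :
    let ga := ((wordProd (D.reflUnit ha) (D.reflUnit hb) (altWord r true) : (Module.End ℝ V)ˣ) :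
      Module.End ℝ V) a
    ga = (U ℝ r).eval (-D.B a b) • a + (U ℝ (r - 1)).eval (-D.B a b) • b ∨
      ga = (U ℝ (r - 1)).eval (-D.B a b) • a + (U ℝ r).eval (-D.B a b) • b := by
  obtain ⟨k, rfl | rfl⟩ := Nat.even_or_odd' r
  · left
    rw [wordProd_altWord_two_mul]
    simpa using D.reflUnit_mul_reflUnit_pow_apply ha hb k
  · right
    rw [wordProd_altWord_two_mul_add_one]
    simpa using D.reflUnit_mul_reflUnit_mul_pow_apply ha hb k

/-- Tits' lemma in rank two. -/
theorem exists_wordProd_apply_eq_nonneg_comb (ha : a ∈ D.Pi) (hb : b ∈ D.Pi) (hab : a ≠ b)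
    {l : List Bool} (hmin : IsMinimalWord (D.reflUnit ha) (D.reflUnit hb) l)
    (hmin_mul : ∀ l', wordProd (D.reflUnit ha) (D.reflUnit hb) l' =
      wordProd (D.reflUnit ha) (D.reflUnit hb) l * D.reflUnit ha → l.length ≤ l'.length) :
    ∃ s t : ℝ, 0 ≤ s ∧ 0 ≤ t ∧ 0 < s + t ∧
      ((wordProd (D.reflUnit ha) (D.reflUnit hb) l : (Module.End ℝ V)ˣ) : Module.End ℝ V) a =
        s • a + t • b := by
  have hP := D.reflUnit_mul_self ha
  have hQ := D.reflUnit_mul_self hb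
  have hl : l = altWord l.length true := by
    rcases l.eq_nil_or_concat' with rfl | ⟨l', x, rfl⟩
    · rfl
    cases x
    · have := hmin_mul l' (by simp [mul_assoc, hP])
      simp at this
    · simpa using hmin.eq_altWord hP hQ
  have hcoeff := chebU_eval_consecutive_nonneg (t := -D.B a b) (r := l.length) (by
    rcases D.offdiag a ha b hb hab with ⟨m, hm, hcos⟩ | hle
    · refine Or.inr ⟨m, hm, by rw [hcos, neg_neg], ?_⟩
      exact length_lt_of_pow_eq_one hP hQ (by omega)
        (D.reflUnit_mul_reflUnit_pow_eq_one ha hb hm hcos) (by rwa [← hl])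
    · exact Or.inl (by linarith))
  rcases D.wordProd_altWord_apply ha hb l.length with h | h <;> rw [← hl] at h
  · exact ⟨_, _, hcoeff.2.1, hcoeff.1, by linarith, h⟩
  · exact ⟨_, _, hcoeff.1, hcoeff.2.1, hcoeff.2.2, h⟩

end RankTwo

lemma len_mul_wordProd_le (hu : u ∈ D.Wgrp) (hp : p ∈ D.simples) (hq : q ∈ D.simples)
    (l : List Bool) : D.len (u * wordProd p q l) ≤ D.len u + l.length := by
  have hl : ∀ s ∈ l.map fun x => cond x q p, s ∈ D.simples := by
    simp only [List.mem_map]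
    rintro s ⟨x, -, rfl⟩
    cases x <;> assumption
  have hmem : wordProd p q l ∈ D.Wgrp := list_prod_mem fun s hs => Subgroup.subset_closure (hl s hs)
  have := D.len_prod_le hl
  rw [List.length_map] at this
  exact (D.len_mul_le hu hmem).trans (by unfold wordProd; omega)

/-- Strip letters `p`, `q` off the right of `w` as long as this shortens it. -/
lemma exists_eq_mul_wordProd (hp : p ∈ D.simples) (hq : q ∈ D.simples) (hw : w ∈ D.Wgrp) :
    ∃ u ∈ D.Wgrp, ∃ l : List Bool, w = u * wordProd p q l ∧ D.len w = D.len u + l.length ∧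
      D.len u ≤ D.len (u * p) ∧ D.len u ≤ D.len (u * q) := by
  induction hn : D.len w using Nat.strong_induction_on generalizing w with
  | _ n ih =>
  by_cases hdesc : ∃ x : Bool, D.len (w * cond x q p) < D.len w
  · obtain ⟨x, hx⟩ := hdesc
    have hxs : cond x q p ∈ D.simples := by cases x <;> assumption
    obtain ⟨u, hu, l, hwl, hlen, hup, huq⟩ :=
      ih _ (hn ▸ hx) (mul_mem hw (Subgroup.subset_closure hxs)) rfl
    refine ⟨u, hu, l ++ [x], ?_, ?_, hup, huq⟩
    · rw [wordProd_append, wordProd_singleton, ← mul_assoc, ← hwl, mul_assoc,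
        D.mul_self_of_mem_simples hxs, mul_one]
    · have := D.len_le_len_mul_add_one hw hxs
      rw [List.length_append, List.length_singleton]
      omega
  · push Not at hdesc
    exact ⟨w, hw, [], by simp, by simp [hn], hdesc false, hdesc true⟩

/-- Tits' lemma. -/
theorem apply_mem_PLC_of_len_le (hw : w ∈ D.Wgrp) {a : V} (ha : a ∈ D.Pi)
    (h : D.len w ≤ D.len (w * D.reflUnit ha)) : (w : Module.End ℝ V) a ∈ PLC D.Pi := by
  induction hn : D.len w using Nat.strong_induction_on generalizing w a with
  | _ n ih =>
  rcases Nat.eq_zero_or_pos (D.len w) with h0 | hpos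
  · rw [D.eq_one_of_len_eq_zero hw h0]
    exact PLC.subset ha
  obtain ⟨b, hb, hwb⟩ := D.exists_len_mul_reflUnit_lt hw hpos
  have hab : a ≠ b := by rintro rfl; omega
  obtain ⟨u, hu, l, rfl, hlen, hua, hub⟩ :=
    D.exists_eq_mul_wordProd (D.reflUnit_mem_simples ha) (D.reflUnit_mem_simples hb) hw
  have hl : l ≠ [] := by
    rintro rfl
    simp only [wordProd_nil, mul_one] at hwb
    omega
  have hlt : D.len u < n := by have := List.length_pos_iff.2 hl; omega
  have hshort := D.len_mul_wordProd_le hu (D.reflUnit_mem_simples ha) (D.reflUnit_mem_simples hb)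
  obtain ⟨s, t, hs, ht, hst, hg⟩ := D.exists_wordProd_apply_eq_nonneg_comb ha hb hab (l := l)
    (fun l' hl' => by have := hshort l'; rw [hl'] at this; omega)
    (fun l' hl' => by have := hshort l'; rw [hl', ← mul_assoc] at this; omega)
  rw [units_mul_apply, hg, map_add, map_smul, map_smul]
  exact PLC.smul_add_smul_mem (ih _ hlt hu ha hua rfl) (ih _ hlt hu hb hub rfl) hs ht hst

theorem mem_posRoots_or_mem_negRoots {x : V} (hx : x ∈ D.roots) :
    x ∈ D.posRoots ∨ x ∈ D.negRoots := by
  obtain ⟨w, hw, a, ha, rfl⟩ := hx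
  rcases le_or_gt (D.len w) (D.len (w * D.reflUnit ha)) with h | h
  · exact Or.inl ⟨⟨w, hw, a, ha, rfl⟩, D.apply_mem_PLC_of_len_le hw ha h⟩
  have hw' := mul_mem hw (D.reflUnit_mem_Wgrp ha)
  have h' : D.len (w * D.reflUnit ha) ≤ D.len (w * D.reflUnit ha * D.reflUnit ha) := by
    rw [mul_assoc, D.reflUnit_mul_self ha, mul_one]
    exact h.le
  have hneg : ((w * D.reflUnit ha : (Module.End ℝ V)ˣ) : Module.End ℝ V) a =
      -(w : Module.End ℝ V) a := by
    rw [units_mul_apply, coe_reflUnit, D.refl_self ha, map_neg]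
  refine Or.inr ?_
  show -(w : Module.End ℝ V) a ∈ D.posRoots
  rw [← hneg]
  exact ⟨⟨_, hw', a, ha, rfl⟩, D.apply_mem_PLC_of_len_le hw' ha h'⟩

lemma refl_mem_posRoots {a x : V} (ha : a ∈ D.Pi) (hx : x ∈ D.posRoots) (hxa : x ≠ a) :
    D.refl a x ∈ D.posRoots :=
  (D.mem_posRoots_or_mem_negRoots (D.apply_mem_roots (D.reflUnit_mem_Wgrp ha) hx.1)).resolve_right
    fun hneg => hxa (D.eq_of_refl_mem_negRoots ha hx hneg)

lemma NSet_one : D.NSet 1 = ∅ :=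
  Set.eq_empty_of_forall_notMem fun _ hy => D.notMem_negRoots_of_mem_posRoots hy.1 hy.2

lemma NSet_reflUnit_mul_subset {a : V} (ha : a ∈ D.Pi) (hw : w ∈ D.Wgrp) :
    D.NSet (D.reflUnit ha * w) ⊆
      insert (((w⁻¹ : (Module.End ℝ V)ˣ) : Module.End ℝ V) a) (D.NSet w) := by
  rintro y ⟨hy, hneg⟩
  rcases D.mem_posRoots_or_mem_negRoots (D.apply_mem_roots hw hy.1) with hpos | hwy
  · by_cases hwa : (w : Module.End ℝ V) y = a
    · exact Or.inl (by rw [← hwa, units_inv_apply_apply])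
    · exact absurd hneg (D.notMem_negRoots_of_mem_posRoots (D.refl_mem_posRoots ha hpos hwa))
  · exact Or.inr ⟨hy, hwy⟩

lemma encard_NSet_prod_le {l : List (Module.End ℝ V)ˣ} (hl : ∀ s ∈ l, s ∈ D.simples) :
    (D.NSet l.prod).encard ≤ l.length := by
  induction l with
  | nil => simp [NSet_one]
  | cons s l ih =>
    obtain ⟨a, ha, rfl⟩ := D.exists_eq_reflUnit (hl s List.mem_cons_self)
    have hl' : ∀ s ∈ l, s ∈ D.simples := fun s hs => hl s (List.mem_cons_of_mem _ hs)
    have hmem : l.prod ∈ D.Wgrp := list_prod_mem fun s hs => Subgroup.subset_closure (hl' s hs)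
    calc (D.NSet (D.reflUnit ha * l.prod)).encard
        ≤ (D.NSet l.prod).encard + 1 :=
          (Set.encard_le_encard (D.NSet_reflUnit_mul_subset ha hmem)).trans
            (Set.encard_insert_le _ _)
      _ ≤ (D.reflUnit ha :: l).length := by
          rw [List.length_cons, Nat.cast_succ]
          gcongr
          exact ih hl'

lemma encard_NSet_le_len (hw : w ∈ D.Wgrp) : (D.NSet w).encard ≤ D.len w := by
  obtain ⟨l, hl, rfl, hlen⟩ := D.exists_reduced_word hw
  exact hlen ▸ D.encard_NSet_prod_le hl

lemma inv_apply_mem_DSet (hw : w ∈ D.Wgrp) {x y : V} (hy : y ∈ D.DSet ((w : Module.End ℝ V) x))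
    (hpos : ((w⁻¹ : (Module.End ℝ V)ˣ) : Module.End ℝ V) y ∈ D.posRoots) :
    ((w⁻¹ : (Module.End ℝ V)ˣ) : Module.End ℝ V) y ∈ D.DSet x := by
  obtain ⟨-, hne, hdom⟩ := hy
  refine ⟨hpos, fun h => hne ?_, fun u hu hux => ?_⟩
  · rw [← h, units_apply_inv_apply]
  · have := hdom (u * w⁻¹) (mul_mem hu (inv_mem hw))
      (by rwa [units_mul_apply, units_inv_apply_apply])
    rwa [units_mul_apply] at this

lemma DSet_apply_subset_NSet_inv (hw : w ∈ D.Wgrp) {x : V} (hx : D.DSet x = ∅) :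
    D.DSet ((w : Module.End ℝ V) x) ⊆ D.NSet w⁻¹ := fun y hy =>
  ⟨hy.1, (D.mem_posRoots_or_mem_negRoots (D.apply_mem_roots (inv_mem hw) hy.1.1)).resolve_left
    fun hpos => by simpa [hx] using D.inv_apply_mem_DSet hw hy hpos⟩

end CoxeterDatum

/-- Lemma 3.10: `{wa : a ∈ D_0, ℓ(w) < n} ∩ D_n = ∅`. -/
theorem short_orbit_of_elementary_misses_Dn (D : CoxeterDatum V) (n : ℕ) :
    {v | ∃ a ∈ D.Dn 0, ∃ w ∈ D.Wgrp, D.len w < n ∧ v = (w : Module.End ℝ V) a}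
      ∩ D.Dn n = ∅ := by
  refine Set.eq_empty_of_forall_notMem ?_
  rintro _ ⟨⟨a, ⟨-, ha_fin, ha_card⟩, w, hw, hlen, rfl⟩, -, hfin, hcard⟩
  have hsub := D.DSet_apply_subset_NSet_inv hw ((Set.ncard_eq_zero ha_fin).1 ha_card)
  have : (n : ℕ∞) ≤ D.len w :=
    calc (n : ℕ∞) = (D.DSet ((w : Module.End ℝ V) a)).encard := by rw [← hcard, hfin.cast_ncard_eq]
      _ ≤ (D.NSet w⁻¹).encard := Set.encard_le_encard hsub
      _ ≤ D.len w⁻¹ := D.encard_NSet_le_len (inv_mem hw)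
      _ ≤ D.len w := by exact_mod_cast D.len_inv_le hw
  exact absurd (by exact_mod_cast this) hlen.not_ge
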